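/- arXiv:2002.10335 — 5 statements merged into one kernel-verified Lean document; each statement's English description precedes it below -/
import Mathlib

section
/- Every simple move M can be written as M = ∑_{i=1}^k δ_{x_i} ⊗ δ_{y_i} − ∑_{i=1}^k δ_{x_i} ⊗ δ_{y_{σ(i)}}, where (x_i, y_i), i = 1,…,k, is any enumeration of the set {M = +1} and σ is some permutation of {1,…,k}. -/
/-!
Every row of `M` contains as many entries `+1` as entries `-1`, so some bijection `ψ` from
`{M = +1}` onto `{M = -1}` preserves rows. Every column also contains as many entries `+1` as
entries `-1`, i.e. as many points `(x_i, y_i)` as points `ψ (x_i, y_i)`; hence a permutation `σ`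
moves the column `y_i` onto the column of `ψ (x_i, y_i)`, and then
`ψ (x_i, y_i) = (x_i, y_{σ(i)})` enumerates `{M = -1}`.
-/

open Finset

lemma eq_ite_one_sub_ite_neg_one {r : ℝ} (h : r = -1 ∨ r = 0 ∨ r = 1) :
    r = (if r = 1 then 1 else 0) - (if r = -1 then 1 else 0) := by
  rcases h with rfl | rfl | rfl <;> norm_num

lemma card_eq_one_eq_card_eq_neg_one {ι : Type*} [Fintype ι] {f : ι → ℝ}
    (hf : ∀ i, f i = -1 ∨ f i = 0 ∨ f i = 1) (hsum : ∑ i, f i = 0) :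
    Nat.card {i // f i = 1} = Nat.card {i // f i = -1} := by
  have hcard : ((#{i | f i = 1} : ℕ) : ℝ) - #{i | f i = -1} = 0 := by
    rw [← hsum, ← sum_boole, ← sum_boole, ← sum_sub_distrib]
    exact sum_congr rfl fun i _ => (eq_ite_one_sub_ite_neg_one (hf i)).symm
  rw [Nat.card_eq_fintype_card, Nat.card_eq_fintype_card, Fintype.card_subtype,
    Fintype.card_subtype]
  exact_mod_cast sub_eq_zero.mp hcard

lemma exists_equiv_comp_eq_of_card_fiber_eq {α β γ : Type*} [Finite α] [Finite β]
    {f : α → γ} {g : β → γ} (h : ∀ c, Nat.card {a // f a = c} = Nat.card {b // g b = c}) :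
    ∃ φ : α ≃ β, ∀ a, g (φ a) = f a := by
  let e := fun c => (Finite.card_eq.mp (h c)).some
  exact ⟨Equiv.ofFiberEquiv e, Equiv.ofFiberEquiv_map e⟩

section Fibers

variable {ι α β : Type*} {Q : α × β → Prop}

lemma card_fiber_fst_of_equiv (e : ι ≃ {q : α × β // Q q}) (a : α) :
    Nat.card {i // (e i).1.1 = a} = Nat.card {b // Q (a, b)} :=
  Nat.card_congr <| (e.subtypeEquiv fun _ => Iff.rfl).trans
    ({ toFun := fun ⟨⟨(_, y), hq⟩, hx⟩ => ⟨y, hx ▸ hq⟩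
       invFun := fun b => ⟨⟨(a, b.1), b.2⟩, rfl⟩
       left_inv := fun ⟨⟨⟨_, _⟩, _⟩, h⟩ => (by subst h; rfl)
       right_inv := fun _ => rfl } : {p : {q // Q q} // p.1.1 = a} ≃ {b // Q (a, b)})

lemma card_fiber_snd_of_equiv (e : ι ≃ {q : α × β // Q q}) (b : β) :
    Nat.card {i // (e i).1.2 = b} = Nat.card {a // Q (a, b)} :=
  Nat.card_congr <| (e.subtypeEquiv fun _ => Iff.rfl).trans
    ({ toFun := fun ⟨⟨(x, _), hq⟩, hy⟩ => ⟨x, hy ▸ hq⟩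
       invFun := fun a => ⟨⟨(a.1, b), a.2⟩, rfl⟩
       left_inv := fun ⟨⟨⟨_, _⟩, _⟩, h⟩ => (by subst h; rfl)
       right_inv := fun _ => rfl } : {p : {q // Q q} // p.1.2 = b} ≃ {a // Q (a, b)})

lemma sum_subtype_ite_eq [Fintype α] [Fintype β] [DecidableEq α] [DecidableEq β]
    [DecidablePred Q] (a : α) (b : β) :
    ∑ p : {q // Q q}, (if a = p.1.1 ∧ b = p.1.2 then (1 : ℝ) else 0) =
      if Q (a, b) then 1 else 0 := by
  rw [← sum_subtype {q | Q q} (by simp) (fun q => if a = q.1 ∧ b = q.2 then (1 : ℝ) else 0)]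
  simp_rw [← Prod.mk.injEq a b, sum_ite_eq]
  simp only [mem_filter, mem_univ, true_and]

end Fibers

/-- Every simple move `M` can be written, for any enumeration `(x_i,y_i)` of the
set `{M = +1}`, as `∑ δ_{x_i} ⊗ δ_{y_i} − ∑ δ_{x_i} ⊗ δ_{y_{σ(i)}}` for some
permutation `σ`. -/
theorem simple_move_eq_permutation_form
    {X : Type*} [Fintype X] [DecidableEq X] (M : X → X → ℝ)
    (hval : ∀ x y, M x y = -1 ∨ M x y = 0 ∨ M x y = 1)
    (hrow : ∀ x, ∑ y, M x y = 0) (hcol : ∀ y, ∑ x, M x y = 0)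
    (k : ℕ) (e : Fin k ≃ {p : X × X // M p.1 p.2 = 1}) :
    ∃ σ : Equiv.Perm (Fin k), ∀ a b,
      M a b = ∑ i, ((if a = (e i).1.1 ∧ b = (e i).1.2 then (1:ℝ) else 0) -
        (if a = (e i).1.1 ∧ b = (e (σ i)).1.2 then (1:ℝ) else 0)) := by
  obtain ⟨ψ, hψ⟩ : ∃ ψ : {p : X × X // M p.1 p.2 = 1} ≃ {p : X × X // M p.1 p.2 = -1},
      ∀ p, (ψ p).1.1 = p.1.1 :=
    exists_equiv_comp_eq_of_card_fiber_eq fun x =>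
      (card_fiber_fst_of_equiv (.refl {p : X × X // M p.1 p.2 = 1}) x).trans <|
        (card_eq_one_eq_card_eq_neg_one (hval x) (hrow x)).trans
          (card_fiber_fst_of_equiv (.refl {p : X × X // M p.1 p.2 = -1}) x).symm
  obtain ⟨σ, hσ⟩ : ∃ σ : Equiv.Perm (Fin k), ∀ i, (e (σ i)).1.2 = (ψ (e i)).1.2 :=
    exists_equiv_comp_eq_of_card_fiber_eq fun y =>
      (card_fiber_snd_of_equiv (e.trans ψ) y).trans <|
        (card_eq_one_eq_card_eq_neg_one (hval · y) (hcol y)).symm.trans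
          (card_fiber_snd_of_equiv e y).symm
  refine ⟨σ, fun a b => ?_⟩
  calc M a b = (if M a b = 1 then 1 else 0) - (if M a b = -1 then 1 else 0) :=
        eq_ite_one_sub_ite_neg_one (hval a b)
    _ = ∑ i, (if a = (e i).1.1 ∧ b = (e i).1.2 then (1:ℝ) else 0) -
          ∑ i, (if a = (ψ (e i)).1.1 ∧ b = (ψ (e i)).1.2 then (1:ℝ) else 0) := by
        rw [Equiv.sum_comp e (fun p => if a = p.1.1 ∧ b = p.1.2 then (1:ℝ) else 0),
          Equiv.sum_comp e (fun p => if a = (ψ p).1.1 ∧ b = (ψ p).1.2 then (1:ℝ) else 0),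
          Equiv.sum_comp ψ (fun p => if a = p.1.1 ∧ b = p.1.2 then (1:ℝ) else 0),
          sum_subtype_ite_eq, sum_subtype_ite_eq]
    _ = _ := by simp only [hψ, ← hσ, sum_sub_distrib]
end

section
/- If γ̃ is an optimal coupling for K_d(μ, ν) and 0 ≤ s ≤ t ≤ 1, then γ̃(x,y;s,t) = [(1−t)μ(x) + sν(y)]·1{x=y} + (t−s)γ̃(x,y) is an optimal coupling of μ(s) = (1−s)μ + sν and μ(t) = (1−t)μ + tν, with cost (t−s)K_d(μ, ν). -/
def IsCoupling {X : Type*} [Fintype X] (μ ν : X → ℝ) (γ : X → X → ℝ) : Prop :=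
  (∀ x y, 0 ≤ γ x y) ∧ (∀ x, ∑ y, γ x y = μ x) ∧ (∀ y, ∑ x, γ x y = ν y)

noncomputable def Kd {X : Type*} [Fintype X] (d : X → X → ℝ) (μ ν : X → ℝ) : ℝ :=
  sInf {r | ∃ γ, IsCoupling μ ν γ ∧ r = ∑ x, ∑ y, d x y * γ x y}

/-!
Write `μ(s) = (1 - s) μ + s ν`. The interpolated coupling moves only the fraction `t - s` of the
mass of `γ̃` and keeps the rest on the diagonal, where `d` vanishes, so its cost is `(t - s) K`
with `K = K_d(μ, ν)`. Conversely, by the same construction there are couplings of `(μ, μ(s))` and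
of `(μ(t), ν)` of costs `s K` and `(1 - t) K`; gluing them to any coupling of `(μ(s), μ(t))` of
cost `c` gives a coupling of `(μ, ν)`, so the triangle inequality yields `K ≤ s K + c + (1 - t) K`,
that is `(t - s) K ≤ c`.
-/

open Finset

section Transport

variable {X : Type*}

section Cost

variable [Fintype X]

def transportCost (d : X → X → ℝ) (γ : X → X → ℝ) : ℝ :=
  ∑ x, ∑ y, d x y * γ x y

namespace IsCoupling

variable {μ ν : X → ℝ} {γ : X → X → ℝ}

lemma le_left (h : IsCoupling μ ν γ) (x y : X) : γ x y ≤ μ x :=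
  h.2.1 x ▸ single_le_sum (fun y _ => h.1 x y) (mem_univ y)

lemma le_right (h : IsCoupling μ ν γ) (x y : X) : γ x y ≤ ν y :=
  h.2.2 y ▸ single_le_sum (f := fun x => γ x y) (fun x _ => h.1 x y) (mem_univ x)

lemma nonneg_left (h : IsCoupling μ ν γ) (x : X) : 0 ≤ μ x :=
  (h.1 x x).trans (h.le_left x x)

lemma nonneg_right (h : IsCoupling μ ν γ) (y : X) : 0 ≤ ν y :=
  (h.1 y y).trans (h.le_right y y)

lemma eq_zero_of_left_eq_zero (h : IsCoupling μ ν γ) {x y : X} (hx : μ x = 0) : γ x y = 0 :=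
  le_antisymm (hx ▸ h.le_left x y) (h.1 x y)

lemma eq_zero_of_right_eq_zero (h : IsCoupling μ ν γ) {x y : X} (hy : ν y = 0) : γ x y = 0 :=
  le_antisymm (hy ▸ h.le_right x y) (h.1 x y)

lemma neg_abs_mul_le_cost_term (h : IsCoupling μ ν γ) (d : X → X → ℝ) (x y : X) :
    -(|d x y| * μ x) ≤ d x y * γ x y := by
  have := h.le_left x y
  nlinarith [neg_abs_le (d x y), abs_nonneg (d x y), h.1 x y]

end IsCoupling

lemma bddBelow_transportCost (d : X → X → ℝ) (μ ν : X → ℝ) :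
    BddBelow {r | ∃ γ, IsCoupling μ ν γ ∧ r = transportCost d γ} := by
  refine ⟨-∑ x, ∑ y, |d x y| * μ x, ?_⟩
  rintro r ⟨γ, hγ, rfl⟩
  simp only [← sum_neg_distrib]
  exact sum_le_sum fun x _ => sum_le_sum fun y _ => hγ.neg_abs_mul_le_cost_term d x y

lemma Kd_le_transportCost (d : X → X → ℝ) {μ ν : X → ℝ} {γ : X → X → ℝ}
    (hγ : IsCoupling μ ν γ) : Kd d μ ν ≤ transportCost d γ :=
  csInf_le (bddBelow_transportCost d μ ν) ⟨γ, hγ, rfl⟩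

lemma le_Kd_of_forall_le {d : X → X → ℝ} {μ ν : X → ℝ} {c : ℝ} {γ : X → X → ℝ} (hγ : IsCoupling μ ν γ)
    (h : ∀ β, IsCoupling μ ν β → c ≤ transportCost d β) : c ≤ Kd d μ ν :=
  le_csInf ⟨_, γ, hγ, rfl⟩ fun _ ⟨β, hβ, hr⟩ => hr ▸ h β hβ

end Cost

section Gluing

variable [Fintype X]

/-- Where `ρ y = 0`, the couplings `α` of `(μ, ρ)` and `β` of `(ρ, ν)` vanish on column and row
`y`, so the junk value `a / 0 = 0` is the right one. -/
noncomputable def glue (ρ : X → ℝ) (α β : X → X → ℝ) (x z : X) : ℝ :=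
  ∑ y, α x y * β y z / ρ y

variable {μ ρ ν : X → ℝ} {α β : X → X → ℝ}

lemma sum_glue_kernel_right (hα : IsCoupling μ ρ α) (hβ : IsCoupling ρ ν β) (x y : X) :
    ∑ z, α x y * β y z / ρ y = α x y := by
  rw [← sum_div, ← mul_sum, hβ.2.1 y]
  exact mul_div_cancel_of_imp hα.eq_zero_of_right_eq_zero

lemma sum_glue_kernel_left (hα : IsCoupling μ ρ α) (hβ : IsCoupling ρ ν β) (y z : X) :
    ∑ x, α x y * β y z / ρ y = β y z := by
  simp_rw [mul_comm (α _ y)]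
  rw [← sum_div, ← mul_sum, hα.2.2 y]
  exact mul_div_cancel_of_imp hβ.eq_zero_of_left_eq_zero

lemma glue_kernel_nonneg (hα : IsCoupling μ ρ α) (hβ : IsCoupling ρ ν β) (x y z : X) :
    0 ≤ α x y * β y z / ρ y :=
  div_nonneg (mul_nonneg (hα.1 x y) (hβ.1 y z)) (hβ.nonneg_left y)

lemma IsCoupling.glue (hα : IsCoupling μ ρ α) (hβ : IsCoupling ρ ν β) :
    IsCoupling μ ν (glue ρ α β) := by
  refine ⟨fun x z => sum_nonneg fun y _ => glue_kernel_nonneg hα hβ x y z, fun x => ?_, fun z => ?_⟩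
  · simp only [_root_.glue]
    rw [sum_comm]
    simp_rw [sum_glue_kernel_right hα hβ]
    exact hα.2.1 x
  · simp only [_root_.glue]
    rw [sum_comm]
    simp_rw [sum_glue_kernel_left hα hβ]
    exact hβ.2.2 z

lemma transportCost_glue_le {d : X → X → ℝ} (hd : ∀ x y z, d x z ≤ d x y + d y z)
    (hα : IsCoupling μ ρ α) (hβ : IsCoupling ρ ν β) :
    transportCost d (glue ρ α β) ≤ transportCost d α + transportCost d β := by
  set w := fun x y z => α x y * β y z / ρ y
  calc transportCost d (glue ρ α β) = ∑ x, ∑ z, ∑ y, d x z * w x y z := by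
        simp only [transportCost, glue, mul_sum, w]
    _ ≤ ∑ x, ∑ z, ∑ y, (d x y * w x y z + d y z * w x y z) := by
        gcongr with x _ z _ y _
        rw [← add_mul]
        exact mul_le_mul_of_nonneg_right (hd x y z) (glue_kernel_nonneg hα hβ x y z)
    _ = ∑ x, ∑ y, d x y * ∑ z, w x y z + ∑ y, ∑ z, d y z * ∑ x, w x y z := by
        simp only [sum_add_distrib, mul_sum]
        congr 1
        · exact sum_congr rfl fun x _ => sum_comm
        · exact sum_comm.trans ((sum_congr rfl fun _ _ => sum_comm).trans sum_comm)
    _ = transportCost d α + transportCost d β := by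
        simp only [w, sum_glue_kernel_right hα hβ, sum_glue_kernel_left hα hβ, transportCost]

lemma Kd_le_add_of_isCoupling {d : X → X → ℝ} (hd : ∀ x y z, d x z ≤ d x y + d y z)
    (hα : IsCoupling μ ρ α) (hβ : IsCoupling ρ ν β) :
    Kd d μ ν ≤ transportCost d α + transportCost d β :=
  (Kd_le_transportCost d (hα.glue hβ)).trans (transportCost_glue_le hd hα hβ)

end Gluing

section Interpolation

def mix (μ ν : X → ℝ) (s : ℝ) (x : X) : ℝ :=
  (1 - s) * μ x + s * ν x

lemma mix_zero (μ ν : X → ℝ) : mix μ ν 0 = μ := by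
  funext x; simp [mix]

lemma mix_one (μ ν : X → ℝ) : mix μ ν 1 = ν := by
  funext x; simp [mix]

variable [DecidableEq X]

def interpCoupling (μ ν : X → ℝ) (γ : X → X → ℝ) (s t : ℝ) (x y : X) : ℝ :=
  (if x = y then (1 - t) * μ x + s * ν y else 0) + (t - s) * γ x y

variable [Fintype X] {μ ν : X → ℝ} {γ : X → X → ℝ} {s t : ℝ}

lemma IsCoupling.interpCoupling (hγ : IsCoupling μ ν γ) (hs : 0 ≤ s) (hst : s ≤ t)
    (ht : t ≤ 1) : IsCoupling (mix μ ν s) (mix μ ν t) (interpCoupling μ ν γ s t) := by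
  refine ⟨fun x y => ?_, fun x => ?_, fun y => ?_⟩
  · have hmass : 0 ≤ (t - s) * γ x y := mul_nonneg (by linarith) (hγ.1 x y)
    have hdiag : 0 ≤ (1 - t) * μ x + s * ν y :=
      add_nonneg (mul_nonneg (by linarith) (hγ.nonneg_left x)) (mul_nonneg hs (hγ.nonneg_right y))
    unfold _root_.interpCoupling
    split_ifs <;> linarith
  · simp only [_root_.interpCoupling, sum_add_distrib, ← mul_sum, hγ.2.1 x, sum_ite_eq,
      mem_univ, if_true, mix]
    ring
  · simp only [_root_.interpCoupling, sum_add_distrib, ← mul_sum, hγ.2.2 y, sum_ite_eq',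
      mem_univ, if_true, mix]
    ring

lemma transportCost_interpCoupling {d : X → X → ℝ} (hd : ∀ x, d x x = 0) :
    transportCost d (interpCoupling μ ν γ s t) = (t - s) * transportCost d γ := by
  have hterm : ∀ x y, d x y * interpCoupling μ ν γ s t x y = (t - s) * (d x y * γ x y) := by
    intro x y
    unfold interpCoupling
    split_ifs with hxy
    · subst hxy; rw [hd]; ring
    · ring
  simp only [transportCost, hterm, ← mul_sum]

lemma Kd_mix_of_optimal {d : X → X → ℝ} (hd : ∀ x, d x x = 0)
    (hd_tri : ∀ x y z, d x z ≤ d x y + d y z) (hγ : IsCoupling μ ν γ)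
    (hγopt : transportCost d γ = Kd d μ ν) (hs : 0 ≤ s) (hst : s ≤ t) (ht : t ≤ 1) :
    Kd d (mix μ ν s) (mix μ ν t) = (t - s) * Kd d μ ν := by
  have hcost : ∀ a b, transportCost d (interpCoupling μ ν γ a b) = (b - a) * Kd d μ ν :=
    fun a b => hγopt ▸ transportCost_interpCoupling hd
  refine le_antisymm ?_ (le_Kd_of_forall_le (hγ.interpCoupling hs hst ht) fun β hβ => ?_)
  · exact (hcost s t) ▸ Kd_le_transportCost d (hγ.interpCoupling hs hst ht)
  · have hhead := mix_zero μ ν ▸ hγ.interpCoupling le_rfl hs (hst.trans ht)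
    have htail := mix_one μ ν ▸ hγ.interpCoupling (hs.trans hst) ht le_rfl
    have hglue := transportCost_glue_le hd_tri hhead hβ
    have hK := Kd_le_add_of_isCoupling hd_tri (hhead.glue hβ) htail
    rw [hcost] at hglue hK
    linarith

end Interpolation

end Transport

theorem interpolated_coupling_is_optimal_general
    {X : Type*} [Fintype X] [DecidableEq X] (d : X → X → ℝ)
    (hd_eq : ∀ x y, d x y = 0 ↔ x = y)
    (hd_tri : ∀ x y z, d x z ≤ d x y + d y z)
    (μ ν : X → ℝ)
    (γ : X → X → ℝ) (hγ : IsCoupling μ ν γ)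
    (hγopt : ∑ x, ∑ y, d x y * γ x y = Kd d μ ν)
    (s t : ℝ) (hs : 0 ≤ s) (hst : s ≤ t) (ht : t ≤ 1) :
    IsCoupling (fun x => (1 - s) * μ x + s * ν x) (fun x => (1 - t) * μ x + t * ν x)
      (fun x y => (if x = y then (1 - t) * μ x + s * ν y else 0) + (t - s) * γ x y) ∧
    (∑ x, ∑ y, d x y *
        ((if x = y then (1 - t) * μ x + s * ν y else 0) + (t - s) * γ x y)) =
      (t - s) * Kd d μ ν ∧
    (∑ x, ∑ y, d x y *
        ((if x = y then (1 - t) * μ x + s * ν y else 0) + (t - s) * γ x y)) =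
      Kd d (fun x => (1 - s) * μ x + s * ν x) (fun x => (1 - t) * μ x + t * ν x) := by
  have hdiag : ∀ x, d x x = 0 := fun x => (hd_eq x x).2 rfl
  have hcost : transportCost d (interpCoupling μ ν γ s t) = (t - s) * Kd d μ ν := by
    rw [transportCost_interpCoupling hdiag, ← hγopt]; rfl
  refine ⟨hγ.interpCoupling hs hst ht, hcost, ?_⟩
  exact hcost.trans (Kd_mix_of_optimal hdiag hd_tri hγ hγopt hs hst ht).symm

/-- If `γ̃` is optimal for `K_d(μ, ν)` and `0 ≤ s ≤ t ≤ 1`, then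
`γ̃(x,y;s,t) = [(1−t)μ(x) + sν(y)]·1{x=y} + (t−s)γ̃(x,y)` is an optimal coupling
of `μ(s)` and `μ(t)` with cost `(t−s) K_d(μ, ν)`. -/
theorem interpolated_coupling_is_optimal
    {X : Type*} [Fintype X] [DecidableEq X] (d : X → X → ℝ)
    (hd_eq : ∀ x y, d x y = 0 ↔ x = y)
    (hd_symm : ∀ x y, d x y = d y x)
    (hd_tri : ∀ x y z, d x z ≤ d x y + d y z)
    (μ ν : X → ℝ)
    (hμ0 : ∀ x, 0 ≤ μ x) (hμ1 : ∑ x, μ x = 1)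
    (hν0 : ∀ x, 0 ≤ ν x) (hν1 : ∑ x, ν x = 1)
    (γ : X → X → ℝ) (hγ : IsCoupling μ ν γ)
    (hγopt : ∑ x, ∑ y, d x y * γ x y = Kd d μ ν)
    (s t : ℝ) (hs : 0 ≤ s) (hst : s ≤ t) (ht : t ≤ 1) :
    IsCoupling (fun x => (1 - s) * μ x + s * ν x) (fun x => (1 - t) * μ x + t * ν x)
      (fun x y => (if x = y then (1 - t) * μ x + s * ν y else 0) + (t - s) * γ x y) ∧
    (∑ x, ∑ y, d x y *
        ((if x = y then (1 - t) * μ x + s * ν y else 0) + (t - s) * γ x y)) =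
      (t - s) * Kd d μ ν ∧
    (∑ x, ∑ y, d x y *
        ((if x = y then (1 - t) * μ x + s * ν y else 0) + (t - s) * γ x y)) =
      Kd d (fun x => (1 - s) * μ x + s * ν x) (fun x => (1 - t) * μ x + t * ν x) :=
  interpolated_coupling_is_optimal_general d hd_eq hd_tri μ ν γ hγ hγopt s t hs hst ht
end

section
/- Given two nondecreasing real sequences x₁ ≤ … ≤ x_N and y₁ ≤ … ≤ y_N, for every pair of permutations σ', σ'' ∈ S_N one has ∑_{i=1}^N |x_i − y_i| ≤ ∑_{i=1}^N |x_{σ'(i)} − y_{σ''(i)}| (Gini's co-graduation theorem: the co-monotone pairing minimizes the sum of absolute differences). -/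
/-!
A cost array `g` with `g i k + g j l ≤ g i l + g j k` for `i ≤ j`, `k ≤ l` (a Monge array) is
minimised along the diagonal: if `σ` is not the identity and `a` is the least point it moves, then
swapping `a` into place exchanges the two entries `g (σ a) a`, `g a (σ⁻¹ a)` for the diagonal-ward
pair `g a a`, `g (σ a) (σ⁻¹ a)`, which does not increase the sum and strictly shrinks the support.
The cost `|x i - y k|` of two nondecreasing sequences is a Monge array, by a case analysis on signs.
-/

open Equiv Finset

theorem abs_sub_add_abs_sub_le_abs_sub_add_abs_sub {α : Type*} [Field α] [LinearOrder α]
    [IsStrictOrderedRing α] {a b c d : α} (hab : a ≤ b) (hcd : c ≤ d) :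
    |a - c| + |b - d| ≤ |a - d| + |b - c| := by
  rcases abs_cases (a - c) with ⟨h1, _⟩ | ⟨h1, _⟩ <;>
  rcases abs_cases (b - d) with ⟨h2, _⟩ | ⟨h2, _⟩ <;>
  rcases abs_cases (a - d) with ⟨h3, _⟩ | ⟨h3, _⟩ <;>
  rcases abs_cases (b - c) with ⟨h4, _⟩ | ⟨h4, _⟩ <;> linarith

theorem Finset.sum_le_sum_of_le_on_pair {ι M : Type*} [Fintype ι] [DecidableEq ι]
    [AddCommMonoid M] [PartialOrder M] [IsOrderedAddMonoid M] {f g : ι → M} {a b : ι}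
    (hab : a ≠ b) (hpair : f a + f b ≤ g a + g b) (hrest : ∀ i, i ≠ a → i ≠ b → f i = g i) :
    ∑ i, f i ≤ ∑ i, g i := by
  rw [← sum_add_sum_compl {a, b} f, ← sum_add_sum_compl {a, b} g, sum_pair hab, sum_pair hab]
  refine add_le_add hpair (sum_congr rfl fun i hi => ?_).le
  simp only [mem_compl, mem_insert, mem_singleton, not_or] at hi
  exact hrest i hi.1 hi.2

theorem sum_apply_self_le_sum_apply_perm_of_monge {ι M : Type*} [LinearOrder ι] [Fintype ι]
    [AddCommMonoid M] [PartialOrder M] [IsOrderedAddMonoid M] (g : ι → ι → M)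
    (hg : ∀ i j k l, i ≤ j → k ≤ l → g i k + g j l ≤ g i l + g j k) (σ : Perm ι) :
    ∑ i, g i i ≤ ∑ i, g (σ i) i := by
  induction hn : σ.support.card using Nat.strong_induction_on generalizing σ with
  | _ n ih =>
  obtain rfl | hσ := eq_or_ne σ 1
  · simp
  have hne : σ.support.Nonempty :=
    nonempty_iff_ne_empty.mpr (Perm.support_eq_empty_iff.not.mpr hσ)
  set a := σ.support.min' hne
  have ha : σ a ≠ a := Perm.mem_support.mp (min'_mem _ hne)
  set b := σ.symm a
  have hσb : σ b = a := σ.apply_symm_apply a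
  have hba : b ≠ a := fun h => ha (by rwa [h] at hσb)
  have hab : a ≤ b :=
    min'_le _ _ (Perm.mem_support.mpr fun h => hba (by rw [← hσb, h]))
  have haσa : a ≤ σ a := min'_le _ _ (Perm.apply_mem_support.mpr (min'_mem _ hne))
  set τ := swap a (σ a) * σ
  calc ∑ i, g i i ≤ ∑ i, g (τ i) i := ih _ (hn ▸ Perm.card_support_swap_mul ha) τ rfl
    _ ≤ ∑ i, g (σ i) i := by
      refine sum_le_sum_of_le_on_pair hba.symm ?_ fun i hia hib => ?_
      · simpa [τ, hσb, add_comm] using hg a (σ a) a b haσa hab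
      · rw [Perm.mul_apply, swap_apply_of_ne_of_ne (fun h => hib (σ.injective (h.trans hσb.symm)))
          (σ.injective.ne hia)]

/-- Gini's co-graduation theorem: for nondecreasing sequences `x` and `y`, the
co-monotone pairing minimizes the sum of absolute differences over all pairs of
permutations. -/
theorem gini_cograduation_min
    (N : ℕ) (x y : Fin N → ℝ) (hx : Monotone x) (hy : Monotone y)
    (σ' σ'' : Equiv.Perm (Fin N)) :
    ∑ i, |x i - y i| ≤ ∑ i, |x (σ' i) - y (σ'' i)| := by
  have hreindex : ∑ i, |x (σ' i) - y (σ'' i)| = ∑ j, |x ((σ' * σ''⁻¹) j) - y j| := by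
    rw [← Equiv.sum_comp σ'' fun j => |x ((σ' * σ''⁻¹) j) - y j|]
    simp
  rw [hreindex]
  exact sum_apply_self_le_sum_apply_perm_of_monge (fun i k => |x i - y k|)
    (fun i j k l hij hkl => abs_sub_add_abs_sub_le_abs_sub_add_abs_sub (hx hij) (hy hkl)) _
end

section
/- Given two nondecreasing real sequences x₁ ≤ … ≤ x_N and y₁ ≤ … ≤ y_N, the counter-monotone pairing maximizes the sum of absolute differences: for every permutation σ ∈ S_N, ∑_{i=1}^N |x_{σ(i)} − y_i| ≤ ∑_{i=1}^N |x_{N+1−i} − y_i|. -/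
/-!
Write `|x (σ i) - y i| = |-y i + x (rev (rev (σ i)))|`. The sequences `-y` and `x ∘ rev` are
both nonincreasing, hence similarly ordered, and `(a, b) ↦ |a + b|` is supermodular. The
rearrangement inequality holds for any supermodular pairing cost, not just for products: sending
the lexicographically largest displaced index back to its place by one transposition can only
increase the sum, by the four-point inequality defining supermodularity.
-/

open Equiv Finset

def Supermodular {α β γ : Type*} [LE α] [LE β] [Add γ] [LE γ] (F : α → β → γ) :
    Prop :=
  ∀ ⦃a a' : α⦄ ⦃b b' : β⦄, a ≤ a' → b ≤ b' → F a' b + F a b' ≤ F a' b' + F a b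

lemma supermodular_abs_add : Supermodular fun a b : ℝ ↦ |a + b| := by
  intro a a' b b' ha hb
  dsimp only
  rcases abs_cases (a' + b) with ⟨h₁, h₁'⟩ | ⟨h₁, h₁'⟩ <;>
  rcases abs_cases (a + b') with ⟨h₂, h₂'⟩ | ⟨h₂, h₂'⟩ <;>
  rcases abs_cases (a' + b') with ⟨h₃, h₃'⟩ | ⟨h₃, h₃'⟩ <;>
  rcases abs_cases (a + b) with ⟨h₄, h₄'⟩ | ⟨h₄, h₄'⟩ <;>
  linarith

namespace Supermodular

variable {ι α β γ : Type*} [Fintype ι] [DecidableEq ι] [LinearOrder α] [LinearOrder β]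
  [AddCommMonoid γ] [PartialOrder γ] [IsOrderedAddMonoid γ]
  {F : α → β → γ} {f : ι → α} {g : ι → β}

lemma sum_comp_perm_le_sum_comp_swap_mul (hF : Supermodular F) (hfg : Monovary f g)
    {σ : Perm ι} {a : ι} (ha : σ a ≠ a)
    (hmax : ∀ i ∈ σ.support, toLex (g i, f i) ≤ toLex (g a, f a)) :
    ∑ i, F (f i) (g (σ i)) ≤ ∑ i, F (f i) (g ((swap a (σ a) * σ) i)) := by
  set b := σ⁻¹ a
  have hσb : σ b = a := σ.apply_symm_apply a
  have hba : b ≠ a := fun h ↦ ha (by rw [← h, hσb, h])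
  have hb_supp : b ∈ σ.support := by rw [Perm.mem_support, hσb]; exact hba.symm
  have hσa_supp : σ a ∈ σ.support := Perm.apply_mem_support.2 (Perm.mem_support.2 ha)
  have hfb : f b ≤ f a := by
    rcases Prod.Lex.le_iff.1 (hmax b hb_supp) with hlt | ⟨-, hle⟩
    · exact hfg hlt
    · exact hle
  have hgσa : g (σ a) ≤ g a := by
    rcases Prod.Lex.le_iff.1 (hmax (σ a) hσa_supp) with hlt | ⟨heq, -⟩
    · exact hlt.le
    · exact heq.le
  have hrest : ∀ i ∈ univ \ {a, b}, (swap a (σ a) * σ) i = σ i := by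
    intro i hi
    simp only [mem_sdiff, mem_univ, mem_insert, mem_singleton, not_or, true_and] at hi
    exact swap_apply_of_ne_of_ne (fun h ↦ hi.2 (σ.injective (h.trans hσb.symm)))
      (σ.injective.ne hi.1)
  rw [← sum_sdiff (subset_univ {a, b}), ← sum_sdiff (subset_univ {a, b}),
    sum_pair hba.symm, sum_pair hba.symm,
    sum_congr rfl fun i hi ↦ congrArg (F (f i)) (congrArg g (hrest i hi))]
  refine add_le_add le_rfl ?_
  simp only [Perm.mul_apply, hσb, swap_apply_left, swap_apply_right]
  exact hF hfb hgσa

theorem sum_comp_perm_le_sum (hF : Supermodular F) (hfg : Monovary f g) (σ : Perm ι) :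
    ∑ i, F (f i) (g (σ i)) ≤ ∑ i, F (f i) (g i) := by
  induction hn : #σ.support using Nat.strong_induction_on generalizing σ with
  | _ n ih =>
    obtain rfl | hσ := eq_or_ne σ 1
    · simp
    obtain ⟨a, ha_supp, hmax⟩ := σ.support.exists_max_image (fun i ↦ toLex (g i, f i))
      (nonempty_iff_ne_empty.2 (Perm.support_eq_empty_iff.not.2 hσ))
    have ha : σ a ≠ a := Perm.mem_support.1 ha_supp
    calc ∑ i, F (f i) (g (σ i))
        ≤ ∑ i, F (f i) (g ((swap a (σ a) * σ) i)) :=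
          hF.sum_comp_perm_le_sum_comp_swap_mul hfg ha hmax
      _ ≤ ∑ i, F (f i) (g i) := ih _ (hn ▸ Perm.card_support_swap_mul ha) _ rfl

end Supermodular

/-- For nondecreasing sequences `x` and `y`, the counter-monotone pairing
maximizes the sum of absolute differences: for every permutation `σ`,
`∑ |x(σ(i)) − y(i)| ≤ ∑ |x(N+1−i) − y(i)|`. -/
theorem gini_countermonotone_max
    (N : ℕ) (x y : Fin N → ℝ) (hx : Monotone x) (hy : Monotone y)
    (σ : Equiv.Perm (Fin N)) :
    ∑ i, |x (σ i) - y i| ≤ ∑ i, |x i.rev - y i| := by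
  have hmono : Monovary (-y) (fun i ↦ x i.rev) := hy.neg.monovary (hx.comp_antitone Fin.rev_anti)
  have key := supermodular_abs_add.sum_comp_perm_le_sum hmono (σ.trans Fin.revPerm)
  simpa only [Pi.neg_apply, neg_add_eq_sub, Equiv.trans_apply, Fin.revPerm_apply, Fin.rev_rev]
    using key
end

section
/- For any coupling γ ∈ P(μ, ν) on X = {1,…,n}, there exist basic moves M₁, …, M_k and positive reals α₁, …, α_k such that the homophily coupling satisfies γ_H = γ − ∑_{i=1}^k α_i M_i and every partial sum γ − ∑_{i=1}^{k̄} α_i M_i, for k̄ = 1,…,k, is again a coupling in P(μ, ν). Consequently any two couplings in P(μ, ν) are connected by a path of basic moves staying inside P(μ, ν). -/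
/-- A basic move `(δ_{x₁} − δ_{x₂}) ⊗ (δ_{y₁} − δ_{y₂})` with `x₁ ≠ x₂`, `y₁ ≠ y₂`. -/
def IsBasicMove {n : ℕ} (M : Fin n → Fin n → ℝ) : Prop :=
  ∃ x₁ x₂ y₁ y₂ : Fin n, x₁ ≠ x₂ ∧ y₁ ≠ y₂ ∧ ∀ a b,
    M a b = ((if a = x₁ then (1:ℝ) else 0) - (if a = x₂ then 1 else 0)) *
            ((if b = y₁ then (1:ℝ) else 0) - (if b = y₂ then 1 else 0))

open Finset Relation

instance {α : Type*} [Finite α] : Finite (Colex α) := Finite.of_equiv α toColex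

lemma Finset.toColex_lt_toColex_of_subset_insert {α : Type*} [PartialOrder α] [DecidableEq α]
    {s t : Finset α} {a b : α} (hst : s ⊆ insert a t) (hbt : b ∈ t) (hbs : b ∉ s) (hab : a ≤ b) :
    toColex s < toColex t :=
  Colex.toColex_lt_toColex.2 ⟨fun h => hbs (h ▸ hbt), fun _ hxs hxt =>
    ⟨b, hbt, hbs, (mem_insert.1 (hst hxs)).resolve_right hxt ▸ hab⟩⟩

lemma Finset.exists_lt_of_sum_eq_of_lt {ι M : Type*} [Fintype ι] [AddCommMonoid M] [LinearOrder M]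
    [IsOrderedCancelAddMonoid M] {f g : ι → M} (hfg : ∑ i, f i = ∑ i, g i) {a : ι}
    (ha : f a < g a) : ∃ b, g b < f b := by
  by_contra! h
  exact (sum_lt_sum (fun i _ => h i) ⟨a, mem_univ a, ha⟩).ne hfg

section NorthWestCorner

variable {X : Type*} [Fintype X] [LinearOrder X] {μ ν : X → ℝ} {γ : X → X → ℝ}

lemma Finset.sum_filter_le_eq_sum_filter_lt_add (f : X → ℝ) (j : X) :
    ∑ k ∈ univ.filter (· ≤ j), f k = ∑ k ∈ univ.filter (· < j), f k + f j := by
  have : univ.filter (· ≤ j) = insert j (univ.filter (· < j)) := by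
    ext k
    simp [le_iff_lt_or_eq, or_comm]
  rw [this, sum_insert (by simp), add_comm]

def IsNorthWestCorner (μ ν : X → ℝ) (γ : X → X → ℝ) : Prop :=
  ∀ i j, γ i j = min (μ i - ∑ k ∈ univ.filter (· < j), γ i k)
    (ν j - ∑ h ∈ univ.filter (· < i), γ h j)

namespace IsNorthWestCorner

lemma transpose (h : IsNorthWestCorner μ ν γ) : IsNorthWestCorner ν μ (fun j i => γ i j) :=
  fun j i => (h i j).trans (min_comm _ _)

lemma sum_filter_le_le (h : IsNorthWestCorner μ ν γ) (i j : X) :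
    ∑ k ∈ univ.filter (· ≤ j), γ i k ≤ μ i := by
  rw [sum_filter_le_eq_sum_filter_lt_add]
  linarith [(h i j).le.trans (min_le_left _ _)]

lemma sum_filter_lt_le (h : IsNorthWestCorner μ ν γ) {i : X} (hμ : 0 ≤ μ i) (j : X) :
    ∑ k ∈ univ.filter (· < j), γ i k ≤ μ i := by
  obtain hempty | hne := (univ.filter (· < j)).eq_empty_or_nonempty
  · simpa [hempty] using hμ
  have hpred : univ.filter (· < j) = univ.filter (· ≤ (univ.filter (· < j)).max' hne) := by
    ext k
    have hp := (mem_filter.1 ((univ.filter (· < j)).max'_mem hne)).2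
    simpa using ⟨fun hk => le_max' _ k (by simpa using hk), fun hk => hk.trans_lt hp⟩
  rw [hpred]
  exact h.sum_filter_le_le i _

lemma nonneg (h : IsNorthWestCorner μ ν γ) (hμ : ∀ i, 0 ≤ μ i) (hν : ∀ j, 0 ≤ ν j) (i j : X) :
    0 ≤ γ i j := by
  rw [h i j]
  exact le_min (sub_nonneg.2 (h.sum_filter_lt_le (hμ i) j))
    (sub_nonneg.2 (h.transpose.sum_filter_lt_le (hν j) i))

lemma sum_row_le (h : IsNorthWestCorner μ ν γ) (i : X) : ∑ k, γ i k ≤ μ i := by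
  have htop : univ.filter (· ≤ univ.max' ⟨i, mem_univ i⟩) = univ :=
    filter_true_of_mem fun k _ => le_max' _ k (mem_univ k)
  simpa [htop] using h.sum_filter_le_le i (univ.max' ⟨i, mem_univ i⟩)

lemma sum_row (h : IsNorthWestCorner μ ν γ) (hμ : ∀ i, 0 ≤ μ i) (hν : ∀ j, 0 ≤ ν j)
    (hsum : ∑ i, μ i ≤ ∑ j, ν j) (i : X) : ∑ k, γ i k = μ i := by
  refine (h.sum_row_le i).antisymm (not_lt.1 fun hlt => ?_)
  -- row `i` is never exhausted, so every entry of it exhausts its column instead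
  have hcol : ∀ j, ∑ l ∈ univ.filter (· ≤ i), γ l j = ν j := by
    intro j
    have hrow : ∑ k ∈ univ.filter (· ≤ j), γ i k ≤ ∑ k, γ i k :=
      sum_le_sum_of_subset_of_nonneg (filter_subset _ _) fun k _ _ => h.nonneg hμ hν i k
    rw [sum_filter_le_eq_sum_filter_lt_add] at hrow
    have hentry : γ i j = ν j - ∑ l ∈ univ.filter (· < i), γ l j := by
      have hlt_row : γ i j < μ i - ∑ k ∈ univ.filter (· < j), γ i k := by linarith
      rw [h i j] at hlt_row ⊢
      exact min_eq_right ((min_lt_iff.1 hlt_row).resolve_left (lt_irrefl _)).le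
    rw [sum_filter_le_eq_sum_filter_lt_add, hentry]
    ring
  have : ∑ j, ν j < ∑ i, μ i := calc
    ∑ j, ν j = ∑ j, ∑ l ∈ univ.filter (· ≤ i), γ l j := sum_congr rfl fun j _ => (hcol j).symm
    _ = ∑ l ∈ univ.filter (· ≤ i), ∑ j, γ l j := sum_comm
    _ < ∑ l ∈ univ.filter (· ≤ i), μ l :=
      sum_lt_sum (fun l _ => h.sum_row_le l) ⟨i, by simp, hlt⟩
    _ ≤ ∑ l, μ l := sum_le_sum_of_subset_of_nonneg (filter_subset _ _) fun l _ _ => hμ l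
  linarith

theorem isCoupling (h : IsNorthWestCorner μ ν γ) (hμ : ∀ i, 0 ≤ μ i) (hν : ∀ j, 0 ≤ ν j)
    (hsum : ∑ i, μ i = ∑ j, ν j) : IsCoupling μ ν γ :=
  ⟨h.nonneg hμ hν, h.sum_row hμ hν hsum.le, h.transpose.sum_row hν hμ hsum.ge⟩

end IsNorthWestCorner

end NorthWestCorner
section BasicMoves

variable {n : ℕ} {μ ν : Fin n → ℝ}

def basicMove (x₁ x₂ y₁ y₂ a b : Fin n) : ℝ :=
  ((if a = x₁ then (1:ℝ) else 0) - (if a = x₂ then 1 else 0)) *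
    ((if b = y₁ then (1:ℝ) else 0) - (if b = y₂ then 1 else 0))

lemma isBasicMove_basicMove {x₁ x₂ y₁ y₂ : Fin n} (hx : x₁ ≠ x₂) (hy : y₁ ≠ y₂) :
    IsBasicMove (basicMove x₁ x₂ y₁ y₂) :=
  ⟨x₁, x₂, y₁, y₂, hx, hy, fun _ _ => rfl⟩

lemma basicMove_ne_zero {x₁ x₂ y₁ y₂ a b : Fin n} (h : basicMove x₁ x₂ y₁ y₂ a b ≠ 0) :
    (a = x₁ ∨ a = x₂) ∧ (b = y₁ ∨ b = y₂) := by
  unfold basicMove at h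
  by_contra hab
  apply h
  split_ifs <;> simp_all

lemma sub_smul_basicMove_nonneg {γ : Fin n → Fin n → ℝ} {α : ℝ} {x₁ x₂ y₁ y₂ : Fin n}
    (hx : x₁ ≠ x₂) (hy : y₁ ≠ y₂) (hγ : ∀ a b, 0 ≤ γ a b) (hα : 0 ≤ α) (h₁ : α ≤ γ x₁ y₁)
    (h₂ : α ≤ γ x₂ y₂) (a b : Fin n) : 0 ≤ γ a b - α * basicMove x₁ x₂ y₁ y₂ a b := by
  by_cases hM : basicMove x₁ x₂ y₁ y₂ a b = 0
  · simpa [hM] using hγ a b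
  obtain ⟨rfl | rfl, rfl | rfl⟩ := basicMove_ne_zero hM <;>
    simp [basicMove, hx, hy, hx.symm, hy.symm] <;> linarith [hγ a b]

namespace IsBasicMove

variable {M : Fin n → Fin n → ℝ}

lemma neg (hM : IsBasicMove M) : IsBasicMove (-M) := by
  obtain ⟨x₁, x₂, y₁, y₂, hx, hy, hM⟩ := hM
  exact ⟨x₁, x₂, y₂, y₁, hx, hy.symm, fun a b => by simp only [Pi.neg_apply, hM]; ring⟩

lemma sum_row (hM : IsBasicMove M) (a : Fin n) : ∑ b, M a b = 0 := by
  obtain ⟨x₁, x₂, y₁, y₂, -, -, hM⟩ := hM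
  simp [hM, ← mul_sum, sum_sub_distrib]

lemma sum_col (hM : IsBasicMove M) (b : Fin n) : ∑ a, M a b = 0 := by
  obtain ⟨x₁, x₂, y₁, y₂, -, -, hM⟩ := hM
  simp [hM, ← sum_mul, sum_sub_distrib]

end IsBasicMove

lemma IsCoupling.sub_smul_of_isBasicMove {γ M : Fin n → Fin n → ℝ} {α : ℝ} (hγ : IsCoupling μ ν γ)
    (hM : IsBasicMove M) (h0 : ∀ a b, 0 ≤ γ a b - α * M a b) :
    IsCoupling μ ν (fun a b => γ a b - α * M a b) :=
  ⟨h0, fun a => by simp [sum_sub_distrib, ← mul_sum, hM.sum_row, hγ.2.1],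
    fun b => by simp [sum_sub_distrib, ← mul_sum, hM.sum_col, hγ.2.2]⟩

end BasicMoves

section Paths

variable {n : ℕ} {μ ν : Fin n → ℝ}

def BasicStep (μ ν : Fin n → ℝ) (γ γ₂ : Fin n → Fin n → ℝ) : Prop :=
  IsCoupling μ ν γ ∧ IsCoupling μ ν γ₂ ∧
    ∃ M α, IsBasicMove M ∧ 0 < α ∧ ∀ a b, γ₂ a b = γ a b - α * M a b

instance : Std.Symm (BasicStep μ ν) where
  symm _ _ := fun ⟨hγ, hγ₂, M, α, hM, hα, h⟩ =>
    ⟨hγ₂, hγ, -M, α, hM.neg, hα, fun a b => by simp [h]⟩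

def IsBasicMovePath (μ ν : Fin n → ℝ) (γ γ' : Fin n → Fin n → ℝ) : Prop :=
  ∃ (k : ℕ) (M : Fin k → Fin n → Fin n → ℝ) (α : Fin k → ℝ),
    (∀ i, IsBasicMove (M i)) ∧ (∀ i, 0 < α i) ∧
    (∀ m : ℕ, m ≤ k → IsCoupling μ ν
      (fun a b => γ a b - ∑ i ∈ univ.filter (fun i : Fin k => (i : ℕ) < m), α i * M i a b)) ∧
    (∀ a b, γ' a b = γ a b - ∑ i, α i * M i a b)

lemma Fin.sum_filter_val_lt_succ {M : Type*} [AddCommMonoid M] {k : ℕ} (f : Fin (k + 1) → M)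
    (m : ℕ) :
    ∑ i ∈ univ.filter (fun i : Fin (k + 1) => (i : ℕ) < m + 1), f i =
      f 0 + ∑ i ∈ univ.filter (fun i : Fin k => (i : ℕ) < m), f i.succ := by
  simp [sum_filter, Fin.sum_univ_succ]

namespace IsBasicMovePath

lemma refl {γ : Fin n → Fin n → ℝ} (hγ : IsCoupling μ ν γ) : IsBasicMovePath μ ν γ γ :=
  ⟨0, Fin.elim0, Fin.elim0, (·.elim0), (·.elim0), fun m _ => by simpa using hγ, by simp⟩

lemma head {γ γ₂ γ' : Fin n → Fin n → ℝ} (hstep : BasicStep μ ν γ γ₂)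
    (hpath : IsBasicMovePath μ ν γ₂ γ') : IsBasicMovePath μ ν γ γ' := by
  obtain ⟨hγ, -, M₀, α₀, hM₀, hα₀, hγ₂⟩ := hstep
  obtain ⟨k, M, α, hM, hα, hpart, hγ'⟩ := hpath
  refine ⟨k + 1, Fin.cons M₀ M, Fin.cons α₀ α, Fin.cases hM₀ hM, Fin.cases hα₀ hα, ?_, ?_⟩
  · rintro (_ | m) hm
    · simpa using hγ
    · convert hpart m (by omega) using 3 with a b
      rw [Fin.sum_filter_val_lt_succ, hγ₂]
      simp only [Fin.cons_zero, Fin.cons_succ]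
      ring
  · intro a b
    simp [hγ', hγ₂, Fin.sum_univ_succ]
    ring

lemma of_reflTransGen {γ γ' : Fin n → Fin n → ℝ} (hγ : IsCoupling μ ν γ)
    (h : ReflTransGen (BasicStep μ ν) γ γ') : IsBasicMovePath μ ν γ γ' := by
  induction h using ReflTransGen.head_induction_on with
  | refl => exact refl hγ
  | head hstep _ ih => exact head hstep (ih hstep.2.1)

end IsBasicMovePath

end Paths

section Connectivity

variable {n : ℕ} {μ ν : Fin n → ℝ}

noncomputable def discrepancy (γ γ' : Fin n → Fin n → ℝ) : Finset (Fin n × Fin n) :=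
  {c | γ c.1 c.2 ≠ γ' c.1 c.2}

lemma mem_discrepancy {γ γ' : Fin n → Fin n → ℝ} {c : Fin n × Fin n} :
    c ∈ discrepancy γ γ' ↔ γ c.1 c.2 ≠ γ' c.1 c.2 := by
  simp [discrepancy]

lemma discrepancy_comm (γ γ' : Fin n → Fin n → ℝ) : discrepancy γ γ' = discrepancy γ' γ := by
  ext
  simp [mem_discrepancy, ne_comm]

lemma eq_of_discrepancy_eq_empty {γ γ' : Fin n → Fin n → ℝ} (h : discrepancy γ γ' = ∅) :
    γ = γ' :=
  funext₂ fun a b => not_not.1 fun hab => (eq_empty_iff_forall_notMem.1 h) (a, b)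
    (mem_discrepancy.2 hab)

lemma discrepancy_sub_smul_basicMove_subset {γ γ' : Fin n → Fin n → ℝ} {α : ℝ}
    {x₁ x₂ y₁ y₂ : Fin n} (h₁₁ : (x₁, y₁) ∈ discrepancy γ γ') (h₁₂ : (x₁, y₂) ∈ discrepancy γ γ')
    (h₂₂ : (x₂, y₂) ∈ discrepancy γ γ') :
    discrepancy (fun a b => γ a b - α * basicMove x₁ x₂ y₁ y₂ a b) γ' ⊆
      insert (x₂, y₁) (discrepancy γ γ') := by
  rintro ⟨a, b⟩ hab
  by_cases hM : basicMove x₁ x₂ y₁ y₂ a b = 0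
  · exact mem_insert_of_mem (mem_discrepancy.2 (by simpa [hM] using mem_discrepancy.1 hab))
  obtain ⟨rfl | rfl, rfl | rfl⟩ := basicMove_ne_zero hM
  · exact mem_insert_of_mem h₁₁
  · exact mem_insert_of_mem h₁₂
  · exact mem_insert_self _ _
  · exact mem_insert_of_mem h₂₂

theorem exists_basicStep_toColex_discrepancy_lt {γ γ' : Fin n → Fin n → ℝ}
    (hγ : IsCoupling μ ν γ) (hγ' : IsCoupling μ ν γ') {i j : Fin n}
    (hmax : Maximal (· ∈ discrepancy γ γ') (i, j)) (hlt : γ i j < γ' i j) :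
    ∃ γ₂, BasicStep μ ν γ γ₂ ∧ toColex (discrepancy γ₂ γ') < toColex (discrepancy γ γ') := by
  obtain ⟨j', hj'⟩ := exists_lt_of_sum_eq_of_lt ((hγ.2.1 i).trans (hγ'.2.1 i).symm) hlt
  obtain ⟨i', hi'⟩ := exists_lt_of_sum_eq_of_lt ((hγ.2.2 j).trans (hγ'.2.2 j).symm) hlt
  have hij' : (i, j') ∈ discrepancy γ γ' := mem_discrepancy.2 hj'.ne'
  have hi'j : (i', j) ∈ discrepancy γ γ' := mem_discrepancy.2 hi'.ne'
  have hii' : i ≠ i' := by rintro rfl; exact lt_asymm hlt hi'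
  have hjj' : j' ≠ j := by rintro rfl; exact lt_asymm hlt hj'
  have hi'_le : i' ≤ i :=
    (le_total i' i).elim id fun h => (hmax.2 hi'j (Prod.mk_le_mk.2 ⟨h, le_rfl⟩)).1
  have hj'_le : j' ≤ j :=
    (le_total j' j).elim id fun h => (hmax.2 hij' (Prod.mk_le_mk.2 ⟨le_rfl, h⟩)).2
  set α := min (γ' i j - γ i j) (min (γ i j' - γ' i j') (γ i' j - γ' i' j))
  have hα_pos : 0 < α := lt_min (sub_pos.2 hlt) (lt_min (sub_pos.2 hj') (sub_pos.2 hi'))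
  have hα_le_ij' : α ≤ γ i j' - γ' i j' := (min_le_right _ _).trans (min_le_left _ _)
  have hα_le_i'j : α ≤ γ i' j - γ' i' j := (min_le_right _ _).trans (min_le_right _ _)
  -- the move shifts mass `α` from `(i, j')` and `(i', j)` to `(i, j)` and `(i', j')`
  set γ₂ : Fin n → Fin n → ℝ := fun a b => γ a b - α * basicMove i i' j' j a b with hγ₂
  have hγ₂_coupling : IsCoupling μ ν γ₂ :=
    hγ.sub_smul_of_isBasicMove (isBasicMove_basicMove hii' hjj') <|
      sub_smul_basicMove_nonneg hii' hjj' hγ.1 hα_pos.le (by linarith [hγ'.1 i j'])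
        (by linarith [hγ'.1 i' j])
  -- `α` is one of the three gaps, so the move closes one of the three discrepancies
  have hα_cases : α = γ' i j - γ i j ∨ α = γ i j' - γ' i j' ∨ α = γ i' j - γ' i' j :=
    (min_choice _ _).imp id fun h => (min_choice _ _).imp h.trans h.trans
  obtain ⟨c, hc, hc₂, hc_le⟩ : ∃ c ∈ discrepancy γ γ', c ∉ discrepancy γ₂ γ' ∧ (i', j') ≤ c := by
    rcases hα_cases with h | h | h
    · refine ⟨(i, j), hmax.1, ?_, Prod.mk_le_mk.2 ⟨hi'_le, hj'_le⟩⟩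
      simp [mem_discrepancy, hγ₂, basicMove, hii', hjj'.symm]
      linarith
    · refine ⟨(i, j'), hij', ?_, Prod.mk_le_mk.2 ⟨hi'_le, le_rfl⟩⟩
      simp [mem_discrepancy, hγ₂, basicMove, hii', hjj']
      linarith
    · refine ⟨(i', j), hi'j, ?_, Prod.mk_le_mk.2 ⟨le_rfl, hj'_le⟩⟩
      simp [mem_discrepancy, hγ₂, basicMove, hii'.symm, hjj'.symm]
      linarith
  exact ⟨γ₂, ⟨hγ, hγ₂_coupling, _, α, isBasicMove_basicMove hii' hjj', hα_pos, fun _ _ => rfl⟩,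
    toColex_lt_toColex_of_subset_insert (discrepancy_sub_smul_basicMove_subset hij' hmax.1 hi'j)
      hc hc₂ hc_le⟩

theorem reflTransGen_basicStep {γ γ' : Fin n → Fin n → ℝ} (hγ : IsCoupling μ ν γ)
    (hγ' : IsCoupling μ ν γ') : ReflTransGen (BasicStep μ ν) γ γ' := by
  induction hs : toColex (discrepancy γ γ') using WellFoundedLT.induction generalizing γ γ' with
  | _ s ih =>
  subst hs
  obtain hempty | hne := (discrepancy γ γ').eq_empty_or_nonempty
  · rw [eq_of_discrepancy_eq_empty hempty]
  obtain ⟨⟨i, j⟩, hmax⟩ := exists_maximal hne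
  rcases (mem_discrepancy.1 hmax.1).lt_or_gt with hlt | hgt
  · obtain ⟨γ₂, hstep, hdec⟩ := exists_basicStep_toColex_discrepancy_lt hγ hγ' hmax hlt
    exact .head hstep (ih _ hdec hstep.2.1 hγ' rfl)
  · rw [discrepancy_comm] at hmax
    obtain ⟨γ₂, hstep, hdec⟩ := exists_basicStep_toColex_discrepancy_lt hγ' hγ hmax hgt
    rw [← discrepancy_comm γ γ'] at hdec
    exact symm (.head hstep (ih _ hdec hstep.2.1 hγ rfl))

end Connectivity

/-- Any coupling can be moved to the homophily coupling `γ_H` by a finite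
sequence of basic moves with positive coefficients, all partial sums staying in
`P(μ, ν)`; consequently any two couplings in `P(μ, ν)` are connected by a path
of basic moves staying inside `P(μ, ν)`. -/
theorem couplings_connected_by_basic_moves
    (n : ℕ) (μ ν : Fin n → ℝ)
    (hμ0 : ∀ i, 0 ≤ μ i) (hμ1 : ∑ i, μ i = 1)
    (hν0 : ∀ j, 0 ≤ ν j) (hν1 : ∑ j, ν j = 1)
    (γH : Fin n → Fin n → ℝ)
    (hγH : ∀ i j, γH i j =
      min (μ i - ∑ k ∈ Finset.univ.filter (fun k => k < j), γH i k)
          (ν j - ∑ h ∈ Finset.univ.filter (fun h => h < i), γH h j))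
    (γ : Fin n → Fin n → ℝ) (hγ : IsCoupling μ ν γ) :
    (∃ (k : ℕ) (M : Fin k → Fin n → Fin n → ℝ) (α : Fin k → ℝ),
      (∀ i, IsBasicMove (M i)) ∧ (∀ i, 0 < α i) ∧
      (∀ m : ℕ, m ≤ k → IsCoupling μ ν
        (fun a b => γ a b - ∑ i ∈ Finset.univ.filter (fun i : Fin k => (i : ℕ) < m),
          α i * M i a b)) ∧
      (∀ a b, γH a b = γ a b - ∑ i, α i * M i a b)) ∧
    (∀ γ' : Fin n → Fin n → ℝ, IsCoupling μ ν γ' →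
      ∃ (k : ℕ) (M : Fin k → Fin n → Fin n → ℝ) (α : Fin k → ℝ),
        (∀ i, IsBasicMove (M i)) ∧ (∀ i, 0 < α i) ∧
        (∀ m : ℕ, m ≤ k → IsCoupling μ ν
          (fun a b => γ a b - ∑ i ∈ Finset.univ.filter (fun i : Fin k => (i : ℕ) < m),
            α i * M i a b)) ∧
        (∀ a b, γ' a b = γ a b - ∑ i, α i * M i a b)) := by
  have hγH_coupling : IsCoupling μ ν γH :=
    IsNorthWestCorner.isCoupling hγH hμ0 hν0 (hμ1.trans hν1.symm)
  have hpath : ∀ γ', IsCoupling μ ν γ' → IsBasicMovePath μ ν γ γ' :=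
    fun γ' hγ' => .of_reflTransGen hγ (reflTransGen_basicStep hγ hγ')
  exact ⟨hpath γH hγH_coupling, hpath⟩
end
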